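/- Let $M$ be an $R$-module, $T \subseteq Spec(M)$, $Q = (\cap_{P \in T}P : M)M$, and suppose $\bar{M} = M/Q$ is Artinian and for every minimal submodule $\bar{N}$ of $\bar{M}$, $N$ is a vertex of $G(\tau_T)$. Then the clique number and chromatic number of $G(\tau_T)$ are equal: $\omega(G(\tau_T)) = \chi(G(\tau_T))$, and both equal the number of minimal submodules of $\bar{M}$. -/

import Mathlib

open Submodule

section Defs
variable (R : Type*) [CommRing R] {M : Type*} [AddCommGroup M] [Module R M]

/-- `(N : M)`, the colon ideal of a submodule with the whole module. -/
def colonTop (N : Submodule R M) : Ideal R := N.colon ⊤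

variable {R}

/-- A prime submodule. -/
def IsPrimeSubmodule (P : Submodule R M) : Prop :=
  P ≠ ⊤ ∧ ∀ (r : R) (m : M), r • m ∈ P → r ∈ colonTop R P ∨ m ∈ P

/-- The prime spectrum of a module, as a set of submodules. -/
def specSet (R : Type*) [CommRing R] (M : Type*) [AddCommGroup M] [Module R M] :
    Set (Submodule R M) := {P | IsPrimeSubmodule P}

/-- `V(N)`. -/
def Vset (N : Submodule R M) : Set (Submodule R M) :=
  {P | IsPrimeSubmodule P ∧ colonTop R N ≤ colonTop R P}

/-- `V^*(N)`. -/
def VstarSet (N : Submodule R M) : Set (Submodule R M) :=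
  {P | IsPrimeSubmodule P ∧ N ≤ P}

/-- The product `NK = (N:M)(K:M)M` of two submodules. -/
def prodSub (N K : Submodule R M) : Submodule R M :=
  (colonTop R N * colonTop R K) • (⊤ : Submodule R M)

/-- The prime radical of a submodule. -/
def radicalSub (N : Submodule R M) : Submodule R M :=
  sInf {P | IsPrimeSubmodule P ∧ N ≤ P}

/-- Adjacency in the Zariski topology-graph `G(τ_T)`. -/
def ZAdj (T : Set (Submodule R M)) (N L : Submodule R M) : Prop :=
  N ≠ L ∧ N ≠ ⊤ ∧ L ≠ ⊤ ∧ Vset N ∪ Vset L = T ∧ Vset N ≠ T ∧ Vset L ≠ T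

/-- Vertices of the Zariski topology-graph `G(τ_T)`. -/
def ZVertex (T : Set (Submodule R M)) (N : Submodule R M) : Prop :=
  ∃ K, ZAdj T N K

/-- The Zariski topology-graph `G(τ_T)` as a simple graph on its vertex set. -/
def ZGraph (T : Set (Submodule R M)) : SimpleGraph {N : Submodule R M // ZVertex T N} where
  Adj a b := ZAdj T a.1 b.1
  symm := ⟨by
    rintro a b ⟨h1, h2, h3, h4, h5, h6⟩
    exact ⟨h1.symm, h3, h2, by rwa [Set.union_comm], h6, h5⟩⟩
  loopless := ⟨by rintro a ⟨h1, -⟩; exact h1 rfl⟩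

end Defs
section Extra
variable {R : Type*} [CommRing R] {M : Type*} [AddCommGroup M] [Module R M]

/-- Prime submodule of a submodule `W`, internal version (i.e. a prime submodule of the
module `W`). -/
def IsPrimeIn (W P : Submodule R M) : Prop :=
  P < W ∧ ∀ (r : R) (m : M), m ∈ W → r • m ∈ P → (∀ x ∈ W, r • x ∈ P) ∨ m ∈ P

/-- The prime radical of `N` computed inside the submodule `W`. -/
def radicalIn (W N : Submodule R M) : Submodule R M :=
  sInf {P | IsPrimeIn W P ∧ N ≤ P} ⊓ W

/-- Vertices of the graph `AG(M)^*`. -/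
def AGstarVertex (N : Submodule R M) : Prop :=
  N ≠ ⊤ ∧ colonTop R N ≠ Module.annihilator R M ∧
    ∃ K, K ≠ ⊤ ∧ colonTop R K ≠ Module.annihilator R M ∧ prodSub N K = ⊥

/-- Adjacency in the graph `AG(M)^*`. -/
def AGstarAdj (N L : Submodule R M) : Prop :=
  N ≠ L ∧ AGstarVertex N ∧ AGstarVertex L ∧ prodSub N L = ⊥

/-- The clique number of a graph, valued in `ℕ∞`. -/
noncomputable def cliqueNumE {V : Type*} (G : SimpleGraph V) : ℕ∞ :=
  ⨆ n ∈ {n : ℕ | ∃ s, G.IsNClique n s}, (n : ℕ∞)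

end Extra
section Aux
variable {R : Type*} [CommRing R] {M : Type*} [AddCommGroup M] [Module R M]

lemma mem_colonTop {r : R} {N : Submodule R M} :
    r ∈ colonTop R N ↔ ∀ m : M, r • m ∈ N := by
  simp [colonTop, Submodule.mem_colon]

lemma colonTop_mono {N L : Submodule R M} (h : N ≤ L) : colonTop R N ≤ colonTop R L :=
  fun _ hr => mem_colonTop.2 fun m => h (mem_colonTop.1 hr m)

lemma smul_colonTop_le (N : Submodule R M) : colonTop R N • (⊤ : Submodule R M) ≤ N :=
  Submodule.smul_le.2 fun _ hr m _ => mem_colonTop.1 hr m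

lemma IsPrimeSubmodule.colon_isPrime {P : Submodule R M} (hP : IsPrimeSubmodule P) :
    (colonTop R P).IsPrime := by
  constructor
  · intro h
    apply hP.1
    rw [eq_top_iff]
    intro m _
    have h1 : (1 : R) ∈ colonTop R P := h ▸ Submodule.mem_top
    simpa using mem_colonTop.1 h1 m
  · intro a b hab
    by_cases ha : a ∈ colonTop R P
    · exact Or.inl ha
    · refine Or.inr (mem_colonTop.2 fun m => ?_)
      have habm : a • (b • m) ∈ P := by
        rw [← mul_smul]; exact mem_colonTop.1 hab m
      rcases hP.2 a (b • m) habm with h | h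
      · exact absurd h ha
      · exact h

lemma vertex_facts {T : Set (Submodule R M)} {N : Submodule R M} (h : ZVertex T N) :
    N ≠ ⊤ ∧ Vset N ⊆ T ∧ Vset N ≠ T := by
  obtain ⟨K, _, hN, _, hU, hVN, _⟩ := h
  exact ⟨hN, hU ▸ Set.subset_union_left, hVN⟩

lemma minimals_adj {T : Set (Submodule R M)} {Q X Y : Submodule R M}
    (hprime : ∀ P ∈ T, IsPrimeSubmodule P)
    (hQle : ∀ P ∈ T, Q ≤ P)
    (hX : Q < X ∧ ∀ K, Q < K → K ≤ X → K = X)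
    (hY : Q < Y ∧ ∀ K, Q < K → K ≤ Y → K = Y)
    (hXY : X ≠ Y) (hXv : ZVertex T X) (hYv : ZVertex T Y) : ZAdj T X Y := by
  have hinf : X ⊓ Y = Q := by
    have hle : Q ≤ X ⊓ Y := le_inf hX.1.le hY.1.le
    rcases hle.lt_or_eq with hlt | he
    · exact absurd ((hX.2 _ hlt inf_le_left).symm.trans (hY.2 _ hlt inf_le_right)) hXY
    · exact he.symm
  have hU : Vset X ∪ Vset Y = T := by
    apply Set.Subset.antisymm
    · exact Set.union_subset (vertex_facts hXv).2.1 (vertex_facts hYv).2.1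
    · intro P hP
      have hPp := hprime P hP
      have hmul : colonTop R X * colonTop R Y ≤ colonTop R P := by
        refine le_trans Ideal.mul_le_inf (le_trans ?_ (colonTop_mono (hinf ▸ hQle P hP)))
        exact fun r hr => mem_colonTop.2 fun m =>
          Submodule.mem_inf.2 ⟨mem_colonTop.1 hr.1 m, mem_colonTop.1 hr.2 m⟩
      rcases hPp.colon_isPrime.mul_le.1 hmul with h | h
      · exact Or.inl ⟨hPp, h⟩
      · exact Or.inr ⟨hPp, h⟩
  exact ⟨hXY, (vertex_facts hXv).1, (vertex_facts hYv).1, hU,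
    (vertex_facts hXv).2.2, (vertex_facts hYv).2.2⟩

lemma exists_minimal_le {Q W : Submodule R M} (hart : IsArtinian R (M ⧸ Q)) (h : Q < W) :
    ∃ X, (Q < X ∧ ∀ K, Q < K → K ≤ X → K = X) ∧ X ≤ W := by
  have hmapbot : ∀ K : Submodule R M, Q < K → ⊥ < Submodule.map Q.mkQ K := by
    intro K hK
    obtain ⟨-, m, hmK, hmQ⟩ := SetLike.lt_iff_le_and_exists.1 hK
    refine bot_lt_iff_ne_bot.2 (Submodule.ne_bot_iff _ |>.2 ⟨Q.mkQ m, Submodule.mem_map_of_mem hmK, ?_⟩)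
    simpa [Submodule.mkQ_apply, Submodule.Quotient.mk_eq_zero] using hmQ
  obtain ⟨B, hB, hBmin⟩ := IsArtinian.set_has_minimal
    {B : Submodule R (M ⧸ Q) | ⊥ < B ∧ B ≤ Submodule.map Q.mkQ W}
    ⟨Submodule.map Q.mkQ W, hmapbot W h, le_rfl⟩
  refine ⟨Submodule.comap Q.mkQ B, ⟨?_, ?_⟩, ?_⟩
  · rw [SetLike.lt_iff_le_and_exists]
    constructor
    · intro x hx
      have : Q.mkQ x = 0 := (Submodule.Quotient.mk_eq_zero Q).2 hx
      simpa [Submodule.mem_comap, this] using B.zero_mem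
    · obtain ⟨-, b, hbB, hb0⟩ := SetLike.lt_iff_le_and_exists.1 hB.1
      obtain ⟨m, rfl⟩ := Q.mkQ_surjective b
      exact ⟨m, hbB, fun hmQ => hb0 ((Submodule.Quotient.mk_eq_zero Q).2 hmQ)⟩
  · intro K hK hKle
    have hmapK : Submodule.map Q.mkQ K ≤ B := le_trans (Submodule.map_mono hKle)
      (by rw [Submodule.map_comap_eq]; exact inf_le_right)
    have heq : Submodule.map Q.mkQ K = B :=
      le_antisymm hmapK <| by
        by_contra hc
        exact hBmin _ ⟨hmapbot K hK, hmapK.trans hB.2⟩ (lt_of_le_of_ne hmapK (by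
          intro he; exact hc (he ▸ le_rfl)))
    have : Submodule.comap Q.mkQ (Submodule.map Q.mkQ K) = K := by
      rw [Submodule.comap_map_eq, Submodule.ker_mkQ, sup_eq_left.2 hK.le]
    rw [← this, heq]
  · intro x hx
    have : Q.mkQ x ∈ Submodule.map Q.mkQ W := hB.2 (Submodule.mem_comap.1 hx)
    obtain ⟨w, hw, hwx⟩ := this
    have : x - w ∈ Q := by
      rw [← Submodule.Quotient.mk_eq_zero Q]
      simp only [Submodule.mkQ_apply] at hwx
      simp [Submodule.Quotient.mk_sub, hwx]
    have hxw : x = w + (x - w) := by abel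
    rw [hxw]
    exact W.add_mem hw (h.le this)

lemma exists_min_Vset_le {T : Set (Submodule R M)} {Q : Submodule R M}
    (hart : IsArtinian R (M ⧸ Q))
    (hprime : ∀ P ∈ T, IsPrimeSubmodule P)
    (hQle : ∀ P ∈ T, Q ≤ P)
    {N : Submodule R M} (hN : ZVertex T N) :
    ∃ X, (Q < X ∧ ∀ K, Q < K → K ≤ X → K = X) ∧ Vset N ⊆ Vset X := by
  set W : Submodule R M := colonTop R N • (⊤ : Submodule R M) ⊔ Q with hW
  have hQW : Q < W := by
    rcases (le_sup_right : Q ≤ W).lt_or_eq with h | h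
    · exact h
    · exfalso
      have hWQ : colonTop R N • (⊤ : Submodule R M) ≤ Q := h ▸ le_sup_left
      have hTsub : T ⊆ Vset N := by
        intro P hP
        refine ⟨hprime P hP, fun r hr => mem_colonTop.2 fun m => ?_⟩
        exact hQle P hP (hWQ (Submodule.smul_mem_smul hr Submodule.mem_top))
      exact (vertex_facts hN).2.2 (Set.Subset.antisymm (vertex_facts hN).2.1 hTsub)
  obtain ⟨X, hXmin, hXW⟩ := exists_minimal_le hart hQW
  refine ⟨X, hXmin, fun P hP => ?_⟩
  obtain ⟨hPp, hcol⟩ := hP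
  have hPT : P ∈ T := (vertex_facts hN).2.1 ⟨hPp, hcol⟩
  have hWP : W ≤ P := sup_le
    (Submodule.smul_le.2 fun r hr m _ => mem_colonTop.1 (hcol hr) m) (hQle P hPT)
  exact ⟨hPp, colonTop_mono (hXW.trans hWP)⟩

end Aux

/-- if `M/Q` is Artinian and for every minimal submodule `N/Q` of `M/Q`
the submodule `N` is a vertex of `G(τ_T)`, then
`ω(G(τ_T)) = χ(G(τ_T)) = ` the number of minimal submodules of `M/Q`. -/
theorem stmt15 {R : Type*} [CommRing R] {M : Type*} [AddCommGroup M] [Module R M]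
    (T : Set (Submodule R M)) (hT : T.Nonempty)
    (Q : Submodule R M) (hQ : Q = colonTop R (sInf T) • (⊤ : Submodule R M))
    (hart : IsArtinian R (M ⧸ Q))
    (hmin : ∀ N : Submodule R M, Q < N → (∀ K, Q < K → K ≤ N → K = N) → ZVertex T N) :
    cliqueNumE (ZGraph T) = (ZGraph T).chromaticNumber ∧
      (ZGraph T).chromaticNumber =
        {N : Submodule R M | Q < N ∧ ∀ K, Q < K → K ≤ N → K = N}.encard := by
  classical
  set S : Set (Submodule R M) := {N | Q < N ∧ ∀ K, Q < K → K ≤ N → K = N} with hSdef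
  by_cases hv : ∃ N : Submodule R M, ZVertex T N
  · -- vertices exist
    obtain ⟨N₀, hN₀⟩ := hv
    have hprime : ∀ P ∈ T, IsPrimeSubmodule P := by
      obtain ⟨K, _, _, _, hU, _, _⟩ := hN₀
      intro P hP
      rw [← hU] at hP
      rcases hP with h | h <;> exact h.1
    have hQle : ∀ P ∈ T, Q ≤ P := fun P hP =>
      le_trans (hQ ▸ smul_colonTop_le (sInf T)) (sInf_le hP)
    have hSvert : ∀ X ∈ S, ZVertex T X := fun X hX => hmin X hX.1 hX.2
    -- (i) encard S ≤ cliqueNum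
    have hclique : ∀ t : Finset (Submodule R M), ↑t ⊆ S →
        (t.card : ℕ∞) ≤ cliqueNumE (ZGraph T) := by
      intro t ht
      have hfinj : Function.Injective
          (fun x : {x // x ∈ t} => (⟨x.1, hSvert x.1 (ht x.2)⟩ : {N // ZVertex T N})) :=
        by intro a b hab
           simp only [Subtype.mk.injEq] at hab
           exact Subtype.coe_injective hab
      set s : Finset {N : Submodule R M // ZVertex T N} := t.attach.map ⟨_, hfinj⟩ with hs
      have hmem : ∀ a ∈ s, a.1 ∈ t := by
        intro a ha
        rw [hs, Finset.mem_map] at ha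
        obtain ⟨x, -, rfl⟩ := ha
        exact x.2
      have hcl : (ZGraph T).IsNClique t.card s := by
        constructor
        · intro a ha b hb hab
          exact minimals_adj hprime hQle (ht (hmem a ha)) (ht (hmem b hb))
            (fun he => hab (Subtype.ext he)) a.2 b.2
        · simp [hs]
      refine le_trans ?_ (le_iSup₂ (f := fun (n : ℕ) (_ : n ∈ {n : ℕ | ∃ s, (ZGraph T).IsNClique n s}) => (n : ℕ∞)) t.card ⟨s, hcl⟩)
      exact le_rfl
    have h1 : S.encard ≤ cliqueNumE (ZGraph T) := by
      rcases S.finite_or_infinite with hfin | hinf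
      · have := hclique hfin.toFinset (by simp)
        rwa [hfin.encard_eq_coe_toFinset_card]
      · rw [hinf.encard_eq]
        by_contra hc
        obtain ⟨m, hm⟩ := WithTop.ne_top_iff_exists.1 (fun he => hc (he ▸ le_rfl))
        obtain ⟨t, htS, htc⟩ := hinf.exists_subset_card_eq (m + 1)
        have := (hclique t htS).trans (le_of_eq hm.symm)
        rw [htc] at this
        exact absurd (Nat.cast_le.1 this) (by omega)
    -- (ii) cliqueNum ≤ chromaticNumber
    have h2 : cliqueNumE (ZGraph T) ≤ (ZGraph T).chromaticNumber := by
      refine iSup₂_le fun n hn => ?_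
      obtain ⟨s, hs⟩ := hn
      have := hs.1.card_le_chromaticNumber
      rwa [hs.2] at this
    -- (iii) chromaticNumber ≤ encard S
    have h3 : (ZGraph T).chromaticNumber ≤ S.encard := by
      rcases S.finite_or_infinite with hfin | hinf
      · have hcolor : ∀ v : {N : Submodule R M // ZVertex T N},
            ∃ X, (Q < X ∧ ∀ K, Q < K → K ≤ X → K = X) ∧ Vset v.1 ⊆ Vset X :=
          fun v => exists_min_Vset_le hart hprime hQle v.2
        choose g hg1 hg2 using hcolor
        haveI : Fintype ↥S := hfin.fintype
        have C : (ZGraph T).Coloring ↥S := by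
          refine SimpleGraph.Coloring.mk (fun v => ⟨g v, hg1 v⟩) ?_
          intro v w hvw heq
          obtain ⟨hne, hv1, hw1, hU, hVv, hVw⟩ := hvw
          have hgvw : g v = g w := congrArg Subtype.val heq
          have hTsub : T ⊆ Vset (g v) := by
            rw [← hU]
            exact Set.union_subset (hg2 v) (hgvw ▸ hg2 w)
          have hfacts := vertex_facts (hSvert (g v) (hg1 v))
          exact hfacts.2.2 (Set.Subset.antisymm hfacts.2.1 hTsub)
        have := C.colorable.chromaticNumber_le
        refine le_trans this ?_
        rw [S.encard_eq_coe_toFinset_card, Set.toFinset_card]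
      · rw [hinf.encard_eq]
        exact le_top
    exact ⟨le_antisymm h2 (h3.trans h1), le_antisymm h3 (h1.trans h2)⟩
  · -- no vertices
    haveI : IsEmpty {N : Submodule R M // ZVertex T N} := ⟨fun x => hv ⟨x.1, x.2⟩⟩
    have hχ : (ZGraph T).chromaticNumber = 0 :=
      SimpleGraph.chromaticNumber_eq_zero_of_isEmpty (G := ZGraph T)
    have hS0 : S = ∅ := by
      ext N
      simp only [Set.mem_empty_iff_false, iff_false]
      intro hN
      exact hv ⟨N, hmin N hN.1 hN.2⟩
    have hω : cliqueNumE (ZGraph T) = 0 := by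
      refine le_antisymm (iSup₂_le fun n hn => ?_) zero_le
      obtain ⟨s, hs⟩ := hn
      have hse : s = ∅ := Finset.eq_empty_of_isEmpty s
      have : n = 0 := by rw [← hs.2, hse]; simp
      simp [this]
    rw [hχ, hω, hS0, Set.encard_empty]
    exact ⟨rfl, rfl⟩
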